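/- Grade-6 identity: let P be a unitary 3×3 complex matrix, let a₁, a₂, a₃ be real numbers with a₁ + a₂ + a₃ = 0, set b_i = (ia_i/2)·P·D_i·Pᴴ and B = b₁ + b₂ + b₃. Then ssin(b₁)·ssin(b₂)·ssin(b₃) = (1/4)·tr(ssin(B))·𝟙. -/

import Mathlib

/-!
Conjugation `X ↦ P X Pᴴ` by a unitary `P` is a ⋆-algebra automorphism commuting with `exp`, hence
with `ssin`, and it preserves traces and fixes scalars; so it suffices to take `P = 1`. Then all
matrices are diagonal: `ssin (diagonal (i t)) = diagonal (i sin t)`. Since `sin` is odd and each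
diagonal entry of `b₁ b₂ b₃` carries exactly two sign flips, every diagonal entry of the left side
is `-i ∏ₖ sin (aₖ/2)`, while `tr (ssin B) = i ∑ₖ sin aₖ = -4 i ∏ₖ sin (aₖ/2)` by the
sum-to-product formula for three angles summing to zero.
-/

open Matrix

noncomputable def ssin (M : Matrix (Fin 3) (Fin 3) ℂ) : Matrix (Fin 3) (Fin 3) ℂ :=
  (1/2 : ℂ) • (NormedSpace.exp M - (NormedSpace.exp M)ᴴ)

theorem Real.sin_add_sin_add_sin_of_add_add_eq_zero {x y z : ℝ} (h : x + y + z = 0) :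
    sin x + sin y + sin z = -4 * sin (x / 2) * sin (y / 2) * sin (z / 2) := by
  obtain rfl : z = -(x + y) := by linear_combination h
  have sin_eq_half_angle : ∀ w, sin w = 2 * sin (w / 2) * cos (w / 2) := fun w => by
    rw [← sin_two_mul, mul_div_cancel₀ _ two_ne_zero]
  rw [sin_eq_half_angle x, sin_eq_half_angle y, sin_eq_half_angle (-(x + y)),
    show -(x + y) / 2 = -(x / 2 + y / 2) by ring, sin_neg, cos_neg, sin_add, cos_add]
  linear_combination (-2 * sin (x / 2) * cos (x / 2)) * sin_sq_add_cos_sq (y / 2) +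
    (-2 * sin (y / 2) * cos (y / 2)) * sin_sq_add_cos_sq (x / 2)

namespace Matrix

variable {n R : Type*} [Fintype n] [DecidableEq n]

theorem trace_conjStarAlgAut [CommRing R] [StarRing R] (U : unitaryGroup n R)
    (A : Matrix n n R) : (Unitary.conjStarAlgAut R _ U A).trace = A.trace := by
  rw [Unitary.conjStarAlgAut_apply, trace_mul_cycle, Unitary.coe_star_mul_self, one_mul]

theorem exp_conjStarAlgAut [NormedCommRing R] [NormedAlgebra ℚ R] [CompleteSpace R] [StarRing R]
    (U : unitaryGroup n R) (A : Matrix n n R) :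
    NormedSpace.exp (Unitary.conjStarAlgAut R _ U A)
      = Unitary.conjStarAlgAut R _ U (NormedSpace.exp A) := by
  simpa using exp_units_conj (Unitary.toUnits U) A

end Matrix

theorem ssin_conjStarAlgAut (U : unitaryGroup (Fin 3) ℂ) (A : Matrix (Fin 3) (Fin 3) ℂ) :
    ssin (Unitary.conjStarAlgAut ℂ _ U A) = Unitary.conjStarAlgAut ℂ _ U (ssin A) := by
  rw [ssin, ssin, exp_conjStarAlgAut, ← star_eq_conjTranspose, ← map_star, ← map_sub,
    ← map_smul, star_eq_conjTranspose]

theorem ssin_diagonal_ofReal_mul_I (t : Fin 3 → ℝ) :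
    ssin (diagonal fun j => (t j : ℂ) * Complex.I)
      = diagonal fun j => (Real.sin (t j) : ℂ) * Complex.I := by
  rw [ssin, exp_diagonal, diagonal_conjTranspose, diagonal_sub, ← diagonal_smul]
  congr 1
  ext j
  simp only [Pi.smul_apply, Pi.exp_def, ← Complex.exp_eq_exp_ℂ, Pi.star_apply,
    RCLike.star_def, Complex.sub_conj, Complex.exp_ofReal_mul_I_im, Complex.ofReal_mul,
    Complex.ofReal_ofNat, smul_eq_mul]
  ring

/-- `halfSigned a i` is the diagonal of `(aᵢ/2) Dᵢ`. -/
noncomputable def halfSigned {n : Type*} [DecidableEq n] (a : n → ℝ) (i j : n) : ℝ :=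
  if j = i then a i / 2 else -(a i / 2)

theorem diagonal_halfSigned_mul_I {n : Type*} [Fintype n] [DecidableEq n] (a : n → ℝ) (i : n) :
    (diagonal fun j => (halfSigned a i j : ℂ) * Complex.I)
      = ((a i : ℂ) * Complex.I / 2) • diagonal (fun j => if j = i then (1 : ℂ) else -1) := by
  rw [← diagonal_smul]
  congr 1
  ext j
  by_cases hj : j = i <;> simp [halfSigned, hj] <;> ring

theorem halfSigned_add_add {a : Fin 3 → ℝ} (hsum : a 0 + a 1 + a 2 = 0) (j : Fin 3) :
    halfSigned a 0 j + halfSigned a 1 j + halfSigned a 2 j = a j := by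
  fin_cases j <;> simp [halfSigned] <;> linarith

theorem sin_halfSigned_mul_mul (a : Fin 3 → ℝ) (j : Fin 3) :
    Real.sin (halfSigned a 0 j) * Real.sin (halfSigned a 1 j) * Real.sin (halfSigned a 2 j)
      = Real.sin (a 0 / 2) * Real.sin (a 1 / 2) * Real.sin (a 2 / 2) := by
  fin_cases j <;> simp [halfSigned, Real.sin_neg]

theorem grade_six_identity_diagonal {a : Fin 3 → ℝ} (hsum : a 0 + a 1 + a 2 = 0) :
    ssin (diagonal fun j => (halfSigned a 0 j : ℂ) * Complex.I)
        * ssin (diagonal fun j => (halfSigned a 1 j : ℂ) * Complex.I)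
        * ssin (diagonal fun j => (halfSigned a 2 j : ℂ) * Complex.I)
      = ((1/4 : ℂ) * (ssin (diagonal fun j => (a j : ℂ) * Complex.I)).trace) • 1 := by
  simp only [ssin_diagonal_ofReal_mul_I, diagonal_mul_diagonal, trace_diagonal, Fin.sum_univ_three]
  rw [← diagonal_one, ← diagonal_smul]
  congr 1
  ext j
  have hprod := congrArg Complex.ofReal (sin_halfSigned_mul_mul a j)
  have hsin := congrArg Complex.ofReal (Real.sin_add_sin_add_sin_of_add_add_eq_zero hsum)
  simp only [Complex.ofReal_mul, Complex.ofReal_add, Complex.ofReal_neg, Complex.ofReal_ofNat]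
    at hprod hsin
  simp only [Pi.smul_apply, smul_eq_mul, mul_one]
  linear_combination Complex.I ^ 3 * hprod - Complex.I / 4 * hsin +
    (Real.sin (a 0 / 2) * Real.sin (a 1 / 2) * Real.sin (a 2 / 2) : ℂ) * Complex.I * Complex.I_sq

/-- Grade-6 identity: with `P` unitary, `a₁ + a₂ + a₃ = 0`,
`bᵢ = (iaᵢ/2) • P • Dᵢ • Pᴴ` and `B = b₁ + b₂ + b₃`, we have
`ssin b₁ * ssin b₂ * ssin b₃ = (1/4)tr(ssin B) • 𝟙`. -/
theorem grade_six_identity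
    (P : Matrix (Fin 3) (Fin 3) ℂ) (hP : P * Pᴴ = 1)
    (a : Fin 3 → ℝ) (hsum : a 0 + a 1 + a 2 = 0)
    (b : Fin 3 → Matrix (Fin 3) (Fin 3) ℂ)
    (hb : ∀ i, b i = ((a i : ℂ) * Complex.I / 2) •
        (P * Matrix.diagonal (fun j => if j = i then (1 : ℂ) else -1) * Pᴴ))
    (B : Matrix (Fin 3) (Fin 3) ℂ) (hB : B = b 0 + b 1 + b 2) :
    ssin (b 0) * ssin (b 1) * ssin (b 2)
      = ((1/4 : ℂ) * (ssin B).trace) • (1 : Matrix (Fin 3) (Fin 3) ℂ) := by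
  obtain ⟨U, rfl⟩ : ∃ U : unitaryGroup (Fin 3) ℂ, (U : Matrix (Fin 3) (Fin 3) ℂ) = P :=
    ⟨⟨P, mem_unitaryGroup_iff.2 hP⟩, rfl⟩
  set φ := Unitary.conjStarAlgAut ℂ _ U
  have hb' : ∀ i, b i = φ (diagonal fun j => (halfSigned a i j : ℂ) * Complex.I) := fun i => by
    rw [hb, diagonal_halfSigned_mul_I, map_smul]
    rfl
  have hB' : B = φ (diagonal fun j => (a j : ℂ) * Complex.I) := by
    rw [hB, hb', hb', hb', ← map_add, ← map_add, diagonal_add, diagonal_add]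
    congr 2
    ext j
    rw [← halfSigned_add_add hsum j]
    push_cast
    ring
  rw [hb', hb', hb', hB', ssin_conjStarAlgAut, ssin_conjStarAlgAut, ssin_conjStarAlgAut,
    ssin_conjStarAlgAut, trace_conjStarAlgAut, ← map_mul, ← map_mul, ← map_one φ, ← map_smul,
    grade_six_identity_diagonal hsum]
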